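/- Let k ≥ 1 and n = 5(2k+1). Then the matrix Z_n is skew-symmetric, each of its rows sums to zero, and for every i ∈ {0,…,n−1} the edge {i, (i+1) mod n} is smoothable for Z_n; in particular Z_n has a full smoothable cycle. -/

import Mathlib

open BigOperators Matrix

/-- The edge `{i,j}` is *smoothable* for the skew-symmetric matrix `B`:
`B i j ≠ 0` and for every `k ∉ {i,j}` the quotient `(B j k + B k i) / B i j`
is a non-negative integer. -/
def IsSmoothable {n : ℕ} (B : Matrix (Fin n) (Fin n) ℂ) (i j : Fin n) : Prop :=
  B i j ≠ 0 ∧ ∀ k : Fin n, k ≠ i → k ≠ j → ∃ m : ℕ, (B j k + B k i) / B i j = (m : ℂ)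

/-- `B` has a *full smoothable cycle*: there is a permutation `σ` of `{0,…,n−1}`
such that every edge `{σ(i), σ((i+1) mod n)}` is smoothable for `B`. -/
def HasFullSmoothableCycle {n : ℕ} (B : Matrix (Fin n) (Fin n) ℂ) : Prop :=
  ∃ σ : Equiv.Perm (Fin n), ∀ i : Fin n,
    IsSmoothable B (σ i)
      (σ ⟨(i.val + 1) % n, Nat.mod_lt _ (Nat.lt_of_le_of_lt (Nat.zero_le _) i.isLt)⟩)

/-- Rows `r_0,…,r_4` of `Z_n`:
`r_0 = (0, 1^{(n−1)/2}, (−1)^{(n−1)/2})`,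
`r_1 = (−1, 0, 2, 2, 1^{(n−7)/2}, (−1)^{(n−1)/2})`,
`r_2 = (−1, −2, 0, 2, 1^{(n−3)/2}, (−1)^{(n−5)/2})`,
`r_3 = (−1, −2, −2, 0, 1^{(n+1)/2}, (−1)^{(n−9)/2})`,
`r_4 = (−1, −1, −1, −1, 0, 1^{(n−1)/2}, (−1)^{(n−9)/2})`. -/
def zRow (n s t : ℕ) : ℂ :=
  match s with
  | 0 => if t = 0 then 0 else if t ≤ (n - 1) / 2 then 1 else -1
  | 1 => if t = 0 then -1 else if t = 1 then 0 else if t ≤ 3 then 2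
         else if t ≤ (n - 1) / 2 then 1 else -1
  | 2 => if t = 0 then -1 else if t = 1 then -2 else if t = 2 then 0 else if t = 3 then 2
         else if t ≤ (n + 3) / 2 then 1 else -1
  | 3 => if t = 0 then -1 else if t ≤ 2 then -2 else if t = 3 then 0
         else if t ≤ (n + 7) / 2 then 1 else -1
  | _ => if t ≤ 3 then -1 else if t = 4 then 0 else if t ≤ (n + 7) / 2 then 1 else -1

/-- The matrix `Z_n` (for `n = 5(2k+1)`): rows `r_0,…,r_4` as above and
`r_i = T⁵(r_{i−5})` for `5 ≤ i ≤ n−1`. -/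
def Zmat (n : ℕ) : Matrix (Fin n) (Fin n) ℂ :=
  Matrix.of fun i j => zRow n (i.val % 5) ((j.val + n - (i.val - i.val % 5)) % n)


/-!
Row `i` of `Z_n` is the base row `r_{i mod 5}` shifted cyclically by `i - i mod 5`, so `Z_n i j`
is entry `t` of `r_{i mod 5}` with `t + i ≡ j + i mod 5 (mod n)`. For the entries `(j,i)` and
`(i,j)` these positions satisfy `t₁ + t₂ ≡ t₁ mod 5 + t₂ mod 5 (mod n)`; for the entries `(i+1,l)`
and `(i,l)` they differ by `0`, or by `5` when `i ≡ 4 (mod 5)`. Skew-symmetry and smoothability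
of the edges `{i, i+1}` thereby become identities between entries of five explicit rows whose
block structure is uniform in `k`, which a case analysis settles. A row sums to the sum of its
first five entries plus the number of `1`s minus the number of `-1`s in its tail.
-/

open Finset

lemma ZMod.eq_of_natCast_eq_of_lt {n a b : ℕ} (ha : a < n) (hb : b < n) (h : (a : ZMod n) = b) :
    a = b := by
  rwa [ZMod.natCast_eq_natCast_iff', Nat.mod_eq_of_lt ha, Nat.mod_eq_of_lt hb] at h

lemma ZMod.eq_or_eq_add_of_natCast_eq {n a b : ℕ} (ha : a < 2 * n) (hb : b < n)
    (h : (a : ZMod n) = b) : a = b ∨ a = b + n := by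
  rw [ZMod.natCast_eq_natCast_iff', Nat.mod_eq_of_lt hb] at h
  rcases Nat.lt_or_ge a n with han | han
  · exact Or.inl (by rwa [Nat.mod_eq_of_lt han] at h)
  · rw [Nat.mod_eq_sub_mod han, Nat.mod_eq_of_lt (by omega)] at h
    omega

lemma sum_Ico_ite_lt_one_neg_one {R : Type*} [Ring R] (m a b : ℕ) :
    ∑ t ∈ Ico m (m + a + b), (if t < m + a then (1 : R) else -1) = a - b := by
  rw [← sum_Ico_consecutive _ (m.le_add_right a) (Nat.le_add_right _ b),
    sum_congr rfl fun t ht => if_pos (mem_Ico.1 ht).2,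
    sum_congr rfl fun t ht => if_neg (mem_Ico.1 ht).1.not_gt]
  simp [sub_eq_add_neg]

lemma sum_range_eq_of_eq_ite_lt {R : Type*} [Ring R] {f : ℕ → R} {m a b n : ℕ}
    (hn : m + a + b = n) (hf : ∀ t, m ≤ t → t < n → f t = if t < m + a then 1 else -1) :
    ∑ t ∈ range n, f t = ∑ t ∈ range m, f t + (a - b) := by
  subst hn
  rw [← sum_range_add_sum_Ico _ (by omega : m ≤ m + a + b),
    sum_congr rfl fun t ht => hf t (mem_Ico.1 ht).1 (mem_Ico.1 ht).2,
    sum_Ico_ite_lt_one_neg_one]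

/-- Row `i` of `Zmat n` is the base row `zRow n (i % 5)` cyclically shifted by `i - i % 5`;
`zCol n i j` is the position in that base row seen at column `j`. -/
def zCol (n : ℕ) (i j : Fin n) : ℕ := (j.val + n - (i.val - i.val % 5)) % n

section

variable {n : ℕ}

lemma Zmat_apply (i j : Fin n) : Zmat n i j = zRow n ((i : ℕ) % 5) (zCol n i j) := rfl

lemma zCol_lt (i j : Fin n) : zCol n i j < n := Nat.mod_lt _ i.pos

lemma zCol_add (i j : Fin n) :
    (zCol n i j : ZMod n) + (i : ℕ) = (j : ℕ) + ((i : ℕ) % 5 : ℕ) := by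
  have h : (j + n - (i - i % 5) : ℕ) + i = j + (i % 5) + n := by omega
  rw [zCol, ZMod.natCast_mod]
  simpa using congrArg (Nat.cast : ℕ → ZMod n) h

lemma zCol_mod_five (h5 : 5 ∣ n) (i j : Fin n) : zCol n i j % 5 = (j : ℕ) % 5 := by
  have h := congrArg (ZMod.castHom h5 (ZMod 5)) (zCol_add i j)
  rw [← Nat.cast_add, ← Nat.cast_add, map_natCast, map_natCast,
    ZMod.natCast_eq_natCast_iff'] at h
  omega

lemma zCol_injective (i : Fin n) : Function.Injective (zCol n i) := fun j j' h =>
  Fin.ext <| ZMod.eq_of_natCast_eq_of_lt j.isLt j'.isLt <| by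
    linear_combination zCol_add i j' - zCol_add i j + congrArg (Nat.cast : ℕ → ZMod n) h

lemma sum_zCol {M : Type*} [AddCommMonoid M] (f : ℕ → M) (i : Fin n) :
    ∑ j, f (zCol n i j) = ∑ t ∈ range n, f t := by
  have he : Function.Bijective fun j : Fin n => (⟨zCol n i j, zCol_lt i j⟩ : Fin n) :=
    Finite.injective_iff_bijective.1 fun j j' h => zCol_injective i (congrArg Fin.val h)
  rw [← Fin.sum_univ_eq_sum_range]
  exact Fintype.sum_bijective _ he _ _ fun _ => rfl

end

section

variable {k n : ℕ}

set_option maxHeartbeats 4000000 in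
lemma zRow_skew {t₁ t₂ : ℕ} (hn : n = 5 * (2 * k + 1)) (hk : 1 ≤ k) (h₁ : t₁ < n) (h₂ : t₂ < n)
    (h : (t₁ : ZMod n) + t₂ = (t₁ % 5 : ℕ) + (t₂ % 5 : ℕ)) :
    zRow n (t₂ % 5) t₁ = -zRow n (t₁ % 5) t₂ := by
  rw [← Nat.cast_add, ← Nat.cast_add] at h
  have hsum := ZMod.eq_or_eq_add_of_natCast_eq (by omega) (by omega) h
  obtain ⟨s, hs⟩ : ∃ s, t₂ % 5 = s := ⟨_, rfl⟩
  obtain ⟨u, hu⟩ : ∃ u, t₁ % 5 = u := ⟨_, rfl⟩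
  rw [hs, hu] at hsum ⊢
  have : s < 5 := by omega
  have : u < 5 := by omega
  clear h
  subst hn
  interval_cases s <;> interval_cases u <;> simp only [zRow] <;> split_ifs <;>
    first | contradiction | omega | norm_num

lemma zRow_succ_ne_zero {s : ℕ} (hn : n = 5 * (2 * k + 1)) (hs : s < 5) :
    zRow n s (s + 1) ≠ 0 := by
  interval_cases s <;> simp only [zRow] <;> split_ifs <;> first | contradiction | omega | norm_num

set_option maxHeartbeats 4000000 in
lemma exists_zRow_succ_sub_eq_mul {s t₁ t₂ : ℕ} (hn : n = 5 * (2 * k + 1)) (hk : 1 ≤ k)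
    (hs : s < 5) (h₁ : t₁ < n) (h₂ : t₂ < n) (hts : t₂ ≠ s) (hts' : t₂ ≠ s + 1)
    (h : (t₁ : ZMod n) + s + 1 = t₂ + ((s + 1) % 5 : ℕ)) :
    ∃ m : ℕ, zRow n ((s + 1) % 5) t₁ - zRow n s t₂ = m * zRow n s (s + 1) := by
  have h' : ((t₁ + (s + 1 - (s + 1) % 5) : ℕ) : ZMod n) = t₂ := by
    rw [Nat.cast_add, Nat.cast_sub (Nat.mod_le _ _)]
    push_cast
    linear_combination h
  have hshift := ZMod.eq_or_eq_add_of_natCast_eq (by omega) h₂ h'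
  clear h h'
  subst hn
  interval_cases s <;> simp only [zRow] <;> split_ifs <;>
    first
      | contradiction
      | omega
      | (refine ⟨0, ?_⟩; norm_num; done)
      | (refine ⟨1, ?_⟩; norm_num; done)
      | (refine ⟨2, ?_⟩; norm_num)

lemma sum_range_zRow {s : ℕ} (hn : n = 5 * (2 * k + 1)) (hk : 1 ≤ k) (hs : s < 5) :
    ∑ t ∈ range n, zRow n s t = 0 := by
  obtain ⟨k, rfl⟩ : ∃ k', k = k' + 1 := ⟨k - 1, by omega⟩
  have h₁ : (n - 1) / 2 = 5 * k + 7 := by omega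
  have h₂ : (n + 3) / 2 = 5 * k + 9 := by omega
  have h₃ : (n + 7) / 2 = 5 * k + 11 := by omega
  interval_cases s
  on_goal 1 => rw [sum_range_eq_of_eq_ite_lt (m := 5) (a := 5 * k + 3) (b := 5 * k + 7) (by omega)
    fun t _ _ => by simp only [zRow]; split_ifs <;> first | rfl | omega]
  on_goal 2 => rw [sum_range_eq_of_eq_ite_lt (m := 5) (a := 5 * k + 3) (b := 5 * k + 7) (by omega)
    fun t _ _ => by simp only [zRow]; split_ifs <;> first | rfl | omega]
  on_goal 3 => rw [sum_range_eq_of_eq_ite_lt (m := 5) (a := 5 * k + 5) (b := 5 * k + 5) (by omega)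
    fun t _ _ => by simp only [zRow]; split_ifs <;> first | rfl | omega]
  on_goal 4 => rw [sum_range_eq_of_eq_ite_lt (m := 5) (a := 5 * k + 7) (b := 5 * k + 3) (by omega)
    fun t _ _ => by simp only [zRow]; split_ifs <;> first | rfl | omega]
  on_goal 5 => rw [sum_range_eq_of_eq_ite_lt (m := 5) (a := 5 * k + 7) (b := 5 * k + 3) (by omega)
    fun t _ _ => by simp only [zRow]; split_ifs <;> first | rfl | omega]
  all_goals norm_num [sum_range_succ, zRow, h₁, h₂, h₃]

lemma Zmat_transpose (hn : n = 5 * (2 * k + 1)) (hk : 1 ≤ k) (i j : Fin n) :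
    Zmat n j i = -Zmat n i j := by
  have h5 : 5 ∣ n := ⟨2 * k + 1, hn⟩
  have h := zRow_skew hn hk (zCol_lt j i) (zCol_lt i j)
    (by rw [zCol_mod_five h5, zCol_mod_five h5]; linear_combination zCol_add j i + zCol_add i j)
  rwa [zCol_mod_five h5, zCol_mod_five h5] at h

lemma sum_Zmat_row (hn : n = 5 * (2 * k + 1)) (hk : 1 ≤ k) (i : Fin n) :
    ∑ j, Zmat n i j = 0 := by
  simp only [Zmat_apply]
  rw [sum_zCol (zRow n ((i : ℕ) % 5)), sum_range_zRow hn hk (Nat.mod_lt _ (by norm_num))]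

lemma isSmoothable_Zmat_succ (hn : n = 5 * (2 * k + 1)) (hk : 1 ≤ k) (i j : Fin n)
    (hj : (j : ℕ) = ((i : ℕ) + 1) % n) : IsSmoothable (Zmat n) i j := by
  have h5 : 5 ∣ n := ⟨2 * k + 1, hn⟩
  obtain ⟨s, hs⟩ : ∃ s, (i : ℕ) % 5 = s := ⟨_, rfl⟩
  have hs5 : s < 5 := hs ▸ Nat.mod_lt _ (by norm_num)
  have hji : ((j : ℕ) : ZMod n) = (i : ℕ) + 1 := by rw [hj, ZMod.natCast_mod]; push_cast; rfl
  have hj5 : (j : ℕ) % 5 = (s + 1) % 5 := by rw [hj, Nat.mod_mod_of_dvd _ h5]; omega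
  have hcol : zCol n i j = s + 1 := ZMod.eq_of_natCast_eq_of_lt (zCol_lt i j) (by omega) <| by
    have hij := zCol_add i j
    rw [hs] at hij
    push_cast
    linear_combination hij + hji
  have hB : Zmat n i j = zRow n s (s + 1) := by rw [Zmat_apply, hs, hcol]
  have hne : zRow n s (s + 1) ≠ 0 := zRow_succ_ne_zero hn hs5
  refine ⟨hB ▸ hne, fun l hli hlj => ?_⟩
  have hil := zCol_add i l
  have hjl := zCol_add j l
  rw [hs] at hil
  rw [hj5] at hjl
  have hts : zCol n i l ≠ s := fun h => hli <| Fin.ext <|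
    ZMod.eq_of_natCast_eq_of_lt l.isLt i.isLt <| by rw [h] at hil; linear_combination -hil
  have hts' : zCol n i l ≠ s + 1 := fun h => hlj <| Fin.ext <|
    ZMod.eq_of_natCast_eq_of_lt l.isLt j.isLt <| by
      rw [h] at hil; push_cast at hil; linear_combination -hil - hji
  obtain ⟨m, hm⟩ := exists_zRow_succ_sub_eq_mul hn hk hs5 (zCol_lt j l) (zCol_lt i l) hts hts'
    (by linear_combination hjl - hil - hji)
  refine ⟨m, ?_⟩
  rw [Zmat_transpose hn hk i l, ← sub_eq_add_neg, Zmat_apply, Zmat_apply, hj5, hs, hm, hB,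
    mul_div_cancel_right₀ _ hne]

end

/-- For `k ≥ 1` and `n = 5(2k+1)`, the matrix `Z_n` is
skew-symmetric, its rows sum to zero, every edge `{i, (i+1) mod n}` is smoothable
for it, and it has a full smoothable cycle. -/
theorem Zmat_has_full_smoothable_cycle (k n : ℕ) (hk : 1 ≤ k)
    (hn : n = 5 * (2 * k + 1)) :
    (∀ i j, Zmat n j i = -Zmat n i j) ∧
    (∀ i, ∑ j, Zmat n i j = 0) ∧
    (∀ i : Fin n,
      IsSmoothable (Zmat n) i ⟨(i.val + 1) % n, Nat.mod_lt _ (by omega)⟩) ∧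
    HasFullSmoothableCycle (Zmat n) := by
  have smooth (i : Fin n) :
      IsSmoothable (Zmat n) i ⟨(i.val + 1) % n, Nat.mod_lt _ (by omega)⟩ :=
    isSmoothable_Zmat_succ hn hk i _ rfl
  exact ⟨Zmat_transpose hn hk, sum_Zmat_row hn hk, smooth, Equiv.refl _, smooth⟩
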